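/- arXiv:2006.10349 — 6 statements merged into one kernel-verified Lean document; each statement's English description precedes it below -/
import Mathlib

section
/- Let x, y, d, n be integers with n ≥ 2 and gcd(x,d) = 1. If (x-d)^5 + x^5 + (x+d)^5 = y^n, then 3 does not divide d and 3 divides y. -/
theorem stmt_5 (x y d : ℤ) (n : ℕ) (hn : 2 ≤ n) (hgcd : Int.gcd x d = 1)
    (heq : (x - d) ^ 5 + x ^ 5 + (x + d) ^ 5 = y ^ n) :
    ¬ (3 ∣ d) ∧ 3 ∣ y := by
  have hn0 : n ≠ 0 := by omega
  have hp3 : Prime (3 : ℤ) := Int.prime_three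
  -- first: 3 ∣ y
  have hy : (3:ℤ) ∣ y := by
    have key : ∀ a b : ZMod 3, (a - b)^5 + a^5 + (a + b)^5 = 0 := by decide
    have h := congrArg (fun z : ℤ => (z : ZMod 3)) heq
    push_cast at h
    rw [key] at h
    have hy0 : (y : ZMod 3) = 0 := pow_eq_zero_iff hn0 |>.mp h.symm
    exact (ZMod.intCast_zmod_eq_zero_iff_dvd y 3).mp hy0
  refine ⟨?_, hy⟩
  rintro ⟨k, rfl⟩
  obtain ⟨m, rfl⟩ := hy
  have hid : (x - 3*k)^5 + x^5 + (x + 3*k)^5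
      = 3 * x^5 + 9 * (20 * x^3 * k^2 + 90 * x * k^4) := by ring
  have hpow : (9:ℤ) ∣ (3*m)^n := by
    have h1 : (9:ℤ) ∣ 3^n := by
      have : (3:ℤ)^2 ∣ 3^n := pow_dvd_pow 3 hn
      simpa using this
    rw [mul_pow]
    exact h1.mul_right _
  have h9 : (9:ℤ) ∣ 3 * x ^ 5 := by
    have : 3 * x^5 = (3*m)^n - 9 * (20 * x^3 * k^2 + 90 * x * k^4) := by
      rw [← heq, hid]; ring
    rw [this]
    exact dvd_sub hpow (Dvd.intro _ rfl)
  have hx5 : (3:ℤ) ∣ x ^ 5 := by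
    obtain ⟨t, ht⟩ := h9
    exact ⟨t, by linarith⟩
  have hx : (3:ℤ) ∣ x := hp3.dvd_of_dvd_pow hx5
  have hco : IsCoprime x (3*k) := Int.isCoprime_iff_gcd_eq_one.mpr hgcd
  have : IsUnit (3:ℤ) := hco.isUnit_of_dvd' hx ⟨k, rfl⟩
  exact absurd (Int.isUnit_iff.mp this) (by norm_num)
end

section
/- Let x, y, d, n be integers with n ≥ 2 and gcd(x,d) = 1, and suppose (x-d)^5 + x^5 + (x+d)^5 = y^n. Set κ = gcd(x,10). Then there exist integers a and b such that x = κ^(n-1) · a^n, 3x^4 + 20x^2 d^2 + 10 d^4 = κ · b^n, and gcd(κ·a, b) = 1. -/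
/-!
Write `Q = 3x⁴ + 20x²d² + 10d⁴`, so that the left-hand side is `x·Q`. Since `κ = gcd(x, 10)`
divides both `x` and `10`, it divides `Q`; write `Q = κq`, so that `(xκ)·q = yⁿ`. The two
factors are coprime: a prime `p` dividing both divides `x` but not `d`, hence divides
`Q - x²(3x² + 20d²) = 10d⁴` and therefore `10`; so `p ∣ κ`, `p² ∣ κq = Q` and, as `p² ∣ x²`,
`p² ∣ 10`, contradicting that `10` is squarefree. As `q > 0`, both `xκ` and `q` are `n`-th powers,
`xκ = cⁿ` and `q = bⁿ`; finally the squarefree `κ` divides `cⁿ`, hence `c = κa`.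
-/

namespace SumOfFifthPowers

def quartic (x d : ℤ) : ℤ := 3 * x ^ 4 + 20 * x ^ 2 * d ^ 2 + 10 * d ^ 4

theorem sum_fifth_powers_eq (x d : ℤ) :
    (x - d) ^ 5 + x ^ 5 + (x + d) ^ 5 = x * quartic x d := by
  unfold quartic; ring

theorem quartic_eq (x d : ℤ) : quartic x d = x ^ 2 * (3 * x ^ 2 + 20 * d ^ 2) + 10 * d ^ 4 := by
  unfold quartic; ring

theorem quartic_pos {x d : ℤ} (h : x ≠ 0 ∨ d ≠ 0) : 0 < quartic x d := by
  unfold quartic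
  rcases h with h | h <;> positivity

theorem gcd_ten_dvd_quartic (x d : ℤ) : (Int.gcd x 10 : ℤ) ∣ quartic x d := by
  rw [quartic_eq]
  exact dvd_add ((Int.gcd_dvd_left x 10).pow two_ne_zero |>.mul_right _)
    ((Int.gcd_dvd_right x 10).mul_right _)

theorem dvd_ten_of_dvd_quartic {m x d : ℤ} (hmd : IsCoprime m d) (hmx : m ∣ x ^ 2)
    (hm : m ∣ quartic x d) : m ∣ 10 := by
  have h : m ∣ 10 * d ^ 4 := by
    rw [quartic_eq] at hm
    simpa using (dvd_add_right (hmx.mul_right _)).mp hm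
  exact hmd.pow_right.dvd_of_dvd_mul_right h

theorem squarefree_ten : Squarefree (10 : ℤ) := by
  rw [show (10 : ℤ) = ((10 : ℕ) : ℤ) from rfl, Int.squarefree_natCast]
  decide +kernel

theorem isCoprime_mul_gcd_ten {x d q : ℤ} (hxd : IsCoprime x d)
    (hq : quartic x d = Int.gcd x 10 * q) : IsCoprime (x * Int.gcd x 10) q := by
  have hq0 : q ≠ 0 := right_ne_zero_of_mul (hq ▸ (quartic_pos hxd.ne_zero_or_ne_zero).ne')
  refine isCoprime_of_prime_dvd (fun h ↦ hq0 h.2) fun p hp hpxκ hpq ↦ ?_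
  have hpx : p ∣ x := (hp.dvd_or_dvd hpxκ).elim id (·.trans (Int.gcd_dvd_left x 10))
  have hpd : IsCoprime p d :=
    hp.coprime_iff_not_dvd.mpr fun hpd ↦ hp.not_isUnit (hxd.isUnit_of_dvd' hpx hpd)
  have hpQ : p ∣ quartic x d := hq ▸ hpq.mul_left _
  have hpκ : p ∣ Int.gcd x 10 :=
    Int.dvd_coe_gcd hpx (dvd_ten_of_dvd_quartic hpd (hpx.pow two_ne_zero) hpQ)
  have hp2 : p ^ 2 ∣ 10 :=
    dvd_ten_of_dvd_quartic hpd.pow_left (pow_dvd_pow_of_dvd hpx 2)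
      (hq ▸ sq p ▸ mul_dvd_mul hpκ hpq)
  exact hp.not_isUnit (squarefree_ten p (sq p ▸ hp2))

end SumOfFifthPowers

namespace Int

theorem exists_eq_pow_of_mul_eq_pow_of_nonneg {a b c : ℤ} (hab : IsCoprime a b) (ha : 0 ≤ a)
    {k : ℕ} (h : a * b = c ^ k) : ∃ d, a = d ^ k := by
  obtain ⟨d, hd⟩ := exists_associated_pow_of_mul_eq_pow' hab h
  refine ⟨d.natAbs, ?_⟩
  rw [← natAbs_of_nonneg ha, ← associated_iff_natAbs.mp hd, natAbs_pow, Nat.cast_pow]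

theorem exists_eq_pow_of_mul_eq_pow_of_pos {a b c : ℤ} (hab : IsCoprime a b) (hb : 0 < b)
    {k : ℕ} (h : a * b = c ^ k) : (∃ d, a = d ^ k) ∧ ∃ e, b = e ^ k := by
  refine ⟨?_, exists_eq_pow_of_mul_eq_pow_of_nonneg hab.symm hb.le (mul_comm a b ▸ h)⟩
  rcases k.even_or_odd with hk | hk
  · exact exists_eq_pow_of_mul_eq_pow_of_nonneg hab
      (nonneg_of_mul_nonneg_left (h ▸ hk.pow_nonneg c) hb) h
  · exact eq_pow_of_mul_eq_pow_odd_left hab hk h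

end Int

open SumOfFifthPowers in
theorem stmt_6 (x y d : ℤ) (n : ℕ) (hn : 2 ≤ n) (hgcd : Int.gcd x d = 1)
    (heq : (x - d) ^ 5 + x ^ 5 + (x + d) ^ 5 = y ^ n) :
    ∃ a b : ℤ, x = (Int.gcd x 10 : ℤ) ^ (n - 1) * a ^ n ∧
      3 * x ^ 4 + 20 * x ^ 2 * d ^ 2 + 10 * d ^ 4 = (Int.gcd x 10 : ℤ) * b ^ n ∧
      Int.gcd ((Int.gcd x 10 : ℤ) * a) b = 1 := by
  set κ : ℤ := (Int.gcd x 10 : ℤ)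
  have hxd : IsCoprime x d := Int.isCoprime_iff_gcd_eq_one.mpr hgcd
  have hκ : 0 < κ := Int.natCast_pos.mpr (Int.gcd_pos_of_ne_zero_right x (by norm_num))
  obtain ⟨q, hq⟩ := gcd_ten_dvd_quartic x d
  have hq_pos : 0 < q := pos_of_mul_pos_right (hq ▸ quartic_pos hxd.ne_zero_or_ne_zero) hκ.le
  have hcop : IsCoprime (x * κ) q := isCoprime_mul_gcd_ten hxd hq
  have hprod : x * κ * q = y ^ n := by rw [← heq, sum_fifth_powers_eq, hq]; ring
  obtain ⟨⟨c, hc⟩, b, rfl⟩ := Int.exists_eq_pow_of_mul_eq_pow_of_pos hcop hq_pos hprod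
  have hκ_sf : Squarefree κ := squarefree_ten.squarefree_of_dvd (Int.gcd_dvd_right x 10)
  obtain ⟨a, rfl⟩ : κ ∣ c := (hκ_sf.dvd_pow_iff_dvd (by omega)).mp (hc ▸ dvd_mul_left κ x)
  refine ⟨a, b, ?_, hq, ?_⟩
  · obtain ⟨m, rfl⟩ : ∃ m, n = m + 1 := ⟨n - 1, by omega⟩
    refine mul_right_cancel₀ hκ.ne' ?_
    rw [hc, Nat.add_sub_cancel]
    ring
  · rw [← Int.isCoprime_iff_gcd_eq_one,
      ← IsCoprime.pow_iff (m := n) (n := n) (by omega) (by omega), ← hc]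
    exact hcop
end

section
/- Let x, d, b be integers with gcd(x,d) = 1 and suppose 3x^4 + 20x^2 d^2 + 10 d^4 = gcd(x,10) · b^2. Then 10 divides x (equivalently, gcd(x,10) = 10). -/
/-!
Write `κ = gcd(x, 10)`. If `10 ∤ x` then `κ ∈ {1, 2, 5}`, and each case dies by a congruence:
* `κ = 1`: `5 ∤ x`, so the left side is `3 x⁴ ≡ 3 (mod 5)`, a non-square;
* `κ = 2`: `x` is even and, by coprimality, `d` is odd, so the left side is `≡ 10 (mod 16)`,
  while `2 b² ≢ 10 (mod 16)`;
* `κ = 5`: `x` is odd, so the left side is `≡ 1` or `3 (mod 8)`,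
  while `5 b² ≡ 0, 4, 5 (mod 8)`.
-/

lemma eq_one_or_two_or_five_or_ten_of_dvd_ten {k : ℕ} (hk : k ∣ 10) :
    k = 1 ∨ k = 2 ∨ k = 5 ∨ k = 10 := by
  have hk' : k ∈ Nat.divisors 10 := Nat.mem_divisors.2 ⟨hk, by norm_num⟩
  have hdiv : Nat.divisors 10 = {1, 2, 5, 10} := by decide
  simpa [hdiv] using hk'

lemma quartic_ne_sq_of_not_five_dvd {x : ℤ} (hx : ¬ 5 ∣ x) (d b : ℤ) :
    3 * x ^ 4 + 20 * x ^ 2 * d ^ 2 + 10 * d ^ 4 ≠ b ^ 2 := by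
  have key : ∀ a e c : ZMod 5, a ≠ 0 →
      3 * a ^ 4 + 20 * a ^ 2 * e ^ 2 + 10 * e ^ 4 ≠ c ^ 2 := by
    decide
  intro h
  have hx5 : (x : ZMod 5) ≠ 0 := by rwa [Ne, ZMod.intCast_zmod_eq_zero_iff_dvd]
  have h5 := congrArg (Int.cast : ℤ → ZMod 5) h
  push_cast at h5
  exact key _ _ _ hx5 h5

lemma quartic_ne_two_mul_sq_of_even_of_odd {x d : ℤ} (hx : Even x) (hd : Odd d) (b : ℤ) :
    3 * x ^ 4 + 20 * x ^ 2 * d ^ 2 + 10 * d ^ 4 ≠ 2 * b ^ 2 := by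
  have key : ∀ y e c : ZMod 16,
      3 * (y + y) ^ 4 + 20 * (y + y) ^ 2 * (2 * e + 1) ^ 2 + 10 * (2 * e + 1) ^ 4 ≠
        2 * c ^ 2 := by
    decide
  obtain ⟨y, rfl⟩ := hx
  obtain ⟨e, rfl⟩ := hd
  intro h
  have h16 := congrArg (Int.cast : ℤ → ZMod 16) h
  push_cast at h16
  exact key _ _ _ h16

lemma quartic_ne_five_mul_sq_of_odd {x : ℤ} (hx : Odd x) (d b : ℤ) :
    3 * x ^ 4 + 20 * x ^ 2 * d ^ 2 + 10 * d ^ 4 ≠ 5 * b ^ 2 := by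
  have key : ∀ y e c : ZMod 8,
      3 * (2 * y + 1) ^ 4 + 20 * (2 * y + 1) ^ 2 * e ^ 2 + 10 * e ^ 4 ≠ 5 * c ^ 2 := by
    decide
  obtain ⟨y, rfl⟩ := hx
  intro h
  have h8 := congrArg (Int.cast : ℤ → ZMod 8) h
  push_cast at h8
  exact key _ _ _ h8

theorem stmt_8 (x d b : ℤ) (hgcd : Int.gcd x d = 1)
    (heq : 3 * x ^ 4 + 20 * x ^ 2 * d ^ 2 + 10 * d ^ 4 = (Int.gcd x 10 : ℤ) * b ^ 2) :
    (10 : ℤ) ∣ x := by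
  have hκx : (Int.gcd x 10 : ℤ) ∣ x := Int.gcd_dvd_left x 10
  have hκ10 : Int.gcd x 10 ∣ 10 := Int.natCast_dvd_natCast.1 (Int.gcd_dvd_right x 10)
  rcases eq_one_or_two_or_five_or_ten_of_dvd_ten hκ10 with hκ | hκ | hκ | hκ <;>
    rw [hκ] at heq hκx
  · have h5 : ¬ 5 ∣ x := fun h => by
      simpa [hκ] using Int.dvd_gcd (b := 10) (c := 5) h (by norm_num)
    exact absurd (by simpa using heq) (quartic_ne_sq_of_not_five_dvd h5 d b)
  · have hx : Even x := even_iff_two_dvd.2 (by exact_mod_cast hκx)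
    have hd : Odd d := Int.not_even_iff_odd.1 fun hd => by
      simpa [hgcd] using Int.dvd_gcd (c := 2) (even_iff_two_dvd.1 hx) (even_iff_two_dvd.1 hd)
    exact absurd heq (quartic_ne_two_mul_sq_of_even_of_odd hx hd b)
  · have hx : Odd x := Int.not_even_iff_odd.1 fun h => by
      simpa [hκ] using Int.dvd_gcd (b := 10) (c := 2) (even_iff_two_dvd.1 h) (by norm_num)
    exact absurd heq (quartic_ne_five_mul_sq_of_odd hx d b)
  · exact_mod_cast hκx
end

section
/- Let a, b, d be integers with b^2 = d^4 + 200 d^2 a^4 + 3000 a^8. Then a = 0. -/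
/-!
Write `Q(a, c, e; x, y) = a x⁴ + c x²y² + e y⁴`; the equation is `b² = Q(1, 200, 3000; d, a²)`,
and we show by infinite descent that `b² = Q(1, 200, 3000; d, A)` forces `A = 0`.

Take `d, A` coprime with `A ≠ 0`; then `5 ∤ d`, since otherwise `b²` would be exactly divisible
by `5³`. Halving the two factors of `(d² + 100A²)² - b² = 7000A⁴` gives coprime integers with
product `1750A⁴`, hence of the form `D₁u⁴, D₂v⁴` with `D₁D₂ = 1750` a unitary factorisation.
Congruences mod 5 and mod 8 (and positivity) leave only `{D₁, D₂} = {1, 1750}`, that is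
`d² = Q(1, -100, 1750; u, v)` with `|v| ≤ |A|`. The same step on
`(u² - 50v²)² - d² = 750v⁴`, where now `v = 2w` and the product is `3000w⁴`, leaves only
`{1, 3000}` and returns `u² = Q(1, 200, 3000; s, t)` with `0 < 2|t| ≤ |v|`. These are the two
halves of a 2-isogeny descent on the rank-0 curve `y² = x³ - 400x² + 28000x`.
-/

theorem Int.prime_five : Prime (5 : ℤ) := Int.prime_iff_natAbs_prime.2 Nat.prime_five

theorem Prime.dvd_of_sq_eq_pow_three_mul {α : Type*} [CommRing α] [IsDomain α] {p b y : α}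
    (hp : Prime p) (h : b ^ 2 = p ^ 3 * y) : p ∣ y := by
  obtain ⟨c, rfl⟩ : p ∣ b := hp.dvd_of_dvd_pow (n := 2) ⟨p ^ 2 * y, by rw [h]; ring⟩
  have hc : c ^ 2 = p * y :=
    mul_left_cancel₀ (pow_ne_zero 2 hp.ne_zero) (by linear_combination h)
  obtain ⟨f, rfl⟩ : p ∣ c := hp.dvd_of_dvd_pow (n := 2) ⟨y, hc⟩
  exact ⟨f ^ 2, mul_left_cancel₀ hp.ne_zero (by linear_combination -hc)⟩

theorem Int.odd_or_odd_of_isCoprime {x y : ℤ} (h : IsCoprime x y) : Odd x ∨ Odd y := by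
  by_contra! hxy
  simp only [Int.not_odd_iff_even] at hxy
  exact Int.prime_two.not_isUnit (h.isUnit_of_dvd' hxy.1.two_dvd hxy.2.two_dvd)

theorem Int.abs_le_abs_mul_left {x y : ℤ} (hx : x ≠ 0) : |y| ≤ |x * y| := by
  rw [abs_mul]; exact le_mul_of_one_le_left (abs_nonneg y) (Int.one_le_abs hx)

theorem Int.exists_add_eq_sub_eq_of_sq_sub_sq {x y N : ℤ} (h : x ^ 2 - y ^ 2 = 4 * N) :
    ∃ m n, x = m + n ∧ y = n - m ∧ m * n = N := by
  have hxy : Even (x - y) := by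
    by_contra hodd
    rw [Int.not_even_iff_odd] at hodd
    have : Odd ((x - y) * (x - y + 2 * y)) := hodd.mul (hodd.add_even (even_two_mul y))
    exact Int.not_even_iff_odd.2 this ⟨2 * N, by linear_combination h⟩
  obtain ⟨m, hm⟩ := hxy
  exact ⟨m, x - m, by ring, by linear_combination -hm,
    mul_left_cancel₀ four_ne_zero (by linear_combination h - (x + y - 2 * m) * hm)⟩

theorem Nat.exists_eq_gcd_mul_pow_of_mul_eq {m n C A k : ℕ} (hC : C ≠ 0) (hk : k ≠ 0)
    (hmn : m.Coprime n) (h : m * n = C * A ^ k) :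
    ∃ u v, C.gcd m * C.gcd n = C ∧ m = C.gcd m * u ^ k ∧ n = C.gcd n * v ^ k ∧ u * v = A := by
  have hC' : C.gcd m * C.gcd n = C :=
    (Nat.gcd_mul_gcd_eq_iff_dvd_mul_of_coprime hmn).2 (h ▸ dvd_mul_right C _)
  obtain ⟨m₁, hm₁⟩ := Nat.gcd_dvd_right C m
  obtain ⟨n₁, hn₁⟩ := Nat.gcd_dvd_right C n
  have hprod : m₁ * n₁ = A ^ k := by
    apply Nat.eq_of_mul_eq_mul_left (Nat.pos_of_ne_zero hC)
    rw [← h, hm₁, hn₁]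
    nth_rw 1 [← hC']
    ring
  have hcop : m₁.Coprime n₁ :=
    (hmn.coprime_dvd_left (Dvd.intro_left _ hm₁.symm)).coprime_dvd_right
      (Dvd.intro_left _ hn₁.symm)
  obtain ⟨u, hu⟩ := exists_eq_pow_of_mul_eq_pow (Nat.isUnit_iff.2 hcop) hprod
  obtain ⟨v, hv⟩ :=
    exists_eq_pow_of_mul_eq_pow (Nat.isUnit_iff.2 hcop.symm) ((mul_comm _ _).trans hprod)
  refine ⟨u, v, hC', hm₁.trans (by rw [hu]), hn₁.trans (by rw [hv]),
    Nat.pow_left_injective hk ?_⟩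
  change (u * v) ^ k = A ^ k
  rw [mul_pow, ← hu, ← hv, hprod]

theorem Int.exists_eq_mul_pow_of_mul_eq {m n C A : ℤ} {k : ℕ} (hk : Even k) (hk0 : k ≠ 0)
    (hC : C ≠ 0) (hA : A ≠ 0) (hmn : IsCoprime m n) (h : m * n = C * A ^ k) :
    ∃ D₁ D₂ u v : ℤ, D₁ * D₂ = C ∧ m = D₁ * u ^ k ∧ n = D₂ * v ^ k ∧ A = u * v ∧
      IsCoprime D₁ D₂ ∧ IsCoprime u v := by
  have hN : m.natAbs * n.natAbs = C.natAbs * A.natAbs ^ k := by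
    simpa only [Int.natAbs_mul, Int.natAbs_pow] using congrArg Int.natAbs h
  obtain ⟨u₀, v₀, hD₀, hm, hn, huv⟩ := Nat.exists_eq_gcd_mul_pow_of_mul_eq
    (Int.natAbs_ne_zero.2 hC) hk0 (Int.isCoprime_iff_gcd_eq_one.1 hmn) hN
  have hsign : A.sign ^ k = 1 := by rw [← hk.pow_abs, Int.abs_sign_of_ne_zero hA, one_pow]
  obtain ⟨D₁, D₂, u, v, hD, rfl, rfl, rfl⟩ : ∃ D₁ D₂ u v : ℤ,
      D₁ * D₂ = C ∧ m = D₁ * u ^ k ∧ n = D₂ * v ^ k ∧ A = u * v := by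
    refine ⟨m.sign * (C.natAbs.gcd m.natAbs : ℕ), n.sign * (C.natAbs.gcd n.natAbs : ℕ), u₀,
      A.sign * v₀, ?_, ?_, ?_, ?_⟩
    · rw [mul_mul_mul_comm, ← Int.sign_mul, h, Int.sign_mul,
        Int.sign_eq_one_of_pos (hk.pow_pos hA), ← Nat.cast_mul, hD₀, mul_one, Int.sign_mul_natAbs]
    · conv_lhs => rw [← Int.sign_mul_natAbs m, hm]
      push_cast; ring
    · conv_lhs => rw [← Int.sign_mul_natAbs n, hn]
      rw [mul_pow, hsign]; push_cast; ring
    · conv_lhs => rw [← Int.sign_mul_natAbs A, ← huv]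
      push_cast; ring
  have hk' := Nat.pos_of_ne_zero hk0
  exact ⟨D₁, D₂, u, v, hD, rfl, rfl, rfl, hmn.of_mul_left_left.of_mul_right_left,
    (IsCoprime.pow_iff hk' hk').1 hmn.of_mul_left_right.of_mul_right_right⟩

theorem Int.sq_gcd_dvd_of_mul_eq {m n C A : ℤ} {k : ℕ} (h : m * n = C * A ^ k)
    (hA : IsCoprime (m + n) A) : (m.gcd n : ℤ) ^ 2 ∣ C := by
  have hm := Int.gcd_dvd_left m n
  have hn := Int.gcd_dvd_right m n
  have hgA : IsCoprime (m.gcd n : ℤ) (A ^ k) :=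
    (hA.of_isCoprime_of_dvd_left (dvd_add hm hn)).pow_right
  exact hgA.pow_left.dvd_of_dvd_mul_right (h ▸ sq (m.gcd n : ℤ) ▸ mul_dvd_mul hm hn)

theorem Int.exists_eq_mul_pow_four_add_of_sq_sub_sq {x y C A : ℤ} (hC : C ≠ 0) (hA : A ≠ 0)
    (h : x ^ 2 - y ^ 2 = 4 * (C * A ^ 4)) (hxA : IsCoprime x A)
    (hgcd : ∀ g : ℕ, g ^ 2 ∣ C.natAbs → (g : ℤ) ∣ x → (g : ℤ) ∣ y → g = 1) :
    ∃ D₁ D₂ u v : ℤ, D₁ * D₂ = C ∧ IsCoprime D₁ D₂ ∧ IsCoprime u v ∧ A = u * v ∧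
      x = D₁ * u ^ 4 + D₂ * v ^ 4 ∧ y = D₂ * v ^ 4 - D₁ * u ^ 4 := by
  obtain ⟨m, n, rfl, rfl, hmn⟩ := Int.exists_add_eq_sub_eq_of_sq_sub_sq h
  have hg := Int.gcd_dvd_left m n
  have hg' := Int.gcd_dvd_right m n
  have hcop : IsCoprime m n := Int.isCoprime_iff_gcd_eq_one.2 <| hgcd _
    (Int.natCast_dvd_natCast.1 ((Int.sq_gcd_dvd_of_mul_eq hmn hxA).trans Int.dvd_natAbs_self))
    (dvd_add hg hg') (dvd_sub hg' hg)
  obtain ⟨D₁, D₂, u, v, hD, rfl, rfl, rfl, hcopD, hcopuv⟩ :=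
    Int.exists_eq_mul_pow_of_mul_eq (by decide) four_ne_zero hC hA hcop hmn
  exact ⟨D₁, D₂, u, v, hD, hcopD, hcopuv, rfl, rfl, rfl⟩

def unitaryDivisors (n : ℕ) : Finset ℕ := n.divisors.filter fun d => d.Coprime (n / d)

theorem Int.exists_mem_unitaryDivisors {D₁ D₂ : ℤ} {C : ℕ} (hC : C ≠ 0) (h : D₁ * D₂ = C)
    (hcop : IsCoprime D₁ D₂) : ∃ k ∈ unitaryDivisors C, (D₁ = k ∨ D₁ = -k) ∧ D₂ = C / D₁ := by
  have hN : D₁.natAbs * D₂.natAbs = C := by simpa [Int.natAbs_mul] using congrArg Int.natAbs h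
  have hD₁ : D₁ ≠ 0 := by rintro rfl; simp [eq_comm, hC] at h
  refine ⟨D₁.natAbs, ?_, Int.natAbs_eq D₁, by rw [← h, Int.mul_ediv_cancel_left _ hD₁]⟩
  rw [unitaryDivisors, Finset.mem_filter, Nat.mem_divisors, ← hN,
    Nat.mul_div_cancel_left _ (Int.natAbs_pos.2 hD₁)]
  exact ⟨⟨dvd_mul_right _ _, hN ▸ hC⟩, Int.isCoprime_iff_gcd_eq_one.1 hcop⟩

theorem unitaryDivisors_1750 : unitaryDivisors 1750 = {1, 2, 7, 14, 125, 250, 875, 1750} := by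
  decide +kernel

theorem unitaryDivisors_3000 : unitaryDivisors 3000 = {1, 3, 8, 24, 125, 375, 1000, 3000} := by
  decide +kernel

def evenQuartic {R : Type*} [CommRing R] (a c e x y : R) : R :=
  a * x ^ 4 + c * x ^ 2 * y ^ 2 + e * y ^ 4

section evenQuartic

variable {R : Type*} [CommRing R]

theorem evenQuartic_comm (a c e x y : R) : evenQuartic a c e x y = evenQuartic e c a y x := by
  unfold evenQuartic; ring

theorem evenQuartic_mul (a c e x y g : R) :
    evenQuartic a c e (x * g) (y * g) = g ^ 4 * evenQuartic a c e x y := by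
  unfold evenQuartic; ring

@[norm_cast]
theorem Int.cast_evenQuartic (a c e x y : ℤ) :
    ((evenQuartic a c e x y : ℤ) : R) = evenQuartic (a : R) c e x y := by
  unfold evenQuartic; push_cast; ring

end evenQuartic

theorem ZMod.intCast_sq_eq_one_of_odd {x : ℤ} (hx : Odd x) : (x : ZMod 8) ^ 2 = 1 := by
  obtain ⟨k, rfl⟩ := hx
  push_cast
  generalize (k : ZMod 8) = k
  revert k; decide

theorem sq_ne_evenQuartic_of_mod_five {z a c e x y : ℤ} (hz : ¬ 5 ∣ z)
    (h : ∀ z' x' y' : ZMod 5, z' ≠ 0 → z' ^ 2 ≠ evenQuartic (a : ZMod 5) c e x' y') :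
    z ^ 2 ≠ evenQuartic a c e x y := fun hq =>
  h z x y (by rwa [Ne, ZMod.intCast_zmod_eq_zero_iff_dvd])
    (by exact_mod_cast congrArg (Int.cast : ℤ → ZMod 5) hq)

theorem odd_sq_ne_evenQuartic_of_mod_eight {z a c e x y : ℤ} (hz : Odd z)
    (h : ∀ x' y' : ZMod 8, evenQuartic (a : ZMod 8) c e x' y' ≠ 1) :
    z ^ 2 ≠ evenQuartic a c e x y := fun hq =>
  h x y <| by
    rw [← ZMod.intCast_sq_eq_one_of_odd hz]
    exact_mod_cast (congrArg (Int.cast : ℤ → ZMod 8) hq).symm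

theorem sq_ne_evenQuartic_of_odd_right {z a c e x y : ℤ} (hy : Odd y)
    (h : ∀ z' x' y' : ZMod 8, y' ^ 2 = 1 → z' ^ 2 ≠ evenQuartic (a : ZMod 8) c e x' y') :
    z ^ 2 ≠ evenQuartic a c e x y := fun hq =>
  h z x y (ZMod.intCast_sq_eq_one_of_odd hy)
    (by exact_mod_cast congrArg (Int.cast : ℤ → ZMod 8) hq)

theorem sq_ne_evenQuartic_of_odd_or_odd {z a c e x y : ℤ} (hxy : Odd x ∨ Odd y)
    (h : ∀ z' x' y' : ZMod 8,
      x' ^ 2 = 1 ∨ y' ^ 2 = 1 → z' ^ 2 ≠ evenQuartic (a : ZMod 8) c e x' y') :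
    z ^ 2 ≠ evenQuartic a c e x y := by
  rcases hxy with hx | hy
  · rw [evenQuartic_comm]
    refine sq_ne_evenQuartic_of_odd_right hx fun z' x' y' hy' => ?_
    rw [evenQuartic_comm]
    exact h z' y' x' (Or.inl hy')
  · exact sq_ne_evenQuartic_of_odd_right hy fun z' x' y' hy' => h z' x' y' (Or.inr hy')

theorem eq_one_or_eq_one_of_sq_eq_evenQuartic_1750 {D₁ D₂ d u v : ℤ} (hD : D₁ * D₂ = 1750)
    (hcop : IsCoprime D₁ D₂) (hpos : 0 < D₁) (hd : ¬ 5 ∣ d) (huv : Odd u ∨ Odd v)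
    (h : d ^ 2 = evenQuartic D₁ (-100) D₂ u v) : D₁ = 1 ∨ D₂ = 1 := by
  obtain ⟨k, hk, hD₁, rfl⟩ := Int.exists_mem_unitaryDivisors (C := 1750) (by norm_num) hD hcop
  rw [unitaryDivisors_1750] at hk
  fin_cases hk <;> rcases hD₁ with rfl | rfl <;> simp only [Nat.cast_ofNat] at h hpos ⊢
  all_goals first
    | decide
    | exact absurd hpos (by decide)
    | exact absurd h (sq_ne_evenQuartic_of_mod_five hd (by decide))
    | exact absurd h (sq_ne_evenQuartic_of_odd_or_odd huv (by decide))

theorem eq_one_or_eq_one_of_sq_eq_evenQuartic_3000 {D₁ D₂ u s t : ℤ} (hD : D₁ * D₂ = 3000)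
    (hcop : IsCoprime D₁ D₂) (hu : Odd u) (hu5 : ¬ 5 ∣ u)
    (h : u ^ 2 = evenQuartic D₁ 200 D₂ s t) : D₁ = 1 ∨ D₂ = 1 := by
  obtain ⟨k, hk, hD₁, rfl⟩ := Int.exists_mem_unitaryDivisors (C := 3000) (by norm_num) hD hcop
  rw [unitaryDivisors_3000] at hk
  fin_cases hk <;> rcases hD₁ with rfl | rfl <;> simp only [Nat.cast_ofNat] at h ⊢
  all_goals first
    | decide
    | exact absurd h (odd_sq_ne_evenQuartic_of_mod_eight hu (by decide))
    | exact absurd h (sq_ne_evenQuartic_of_mod_five hu5 (by decide))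

theorem not_five_dvd_of_sq_eq_evenQuartic {b d A : ℤ} (hcop : IsCoprime d A)
    (h : b ^ 2 = evenQuartic 1 200 3000 d A) : ¬ 5 ∣ d := by
  have hp := Int.prime_five
  rintro ⟨e, rfl⟩
  have h5 : (5 : ℤ) ∣ 5 * (e ^ 4 + 8 * e ^ 2 * A ^ 2) + 24 * A ^ 4 :=
    hp.dvd_of_sq_eq_pow_three_mul (b := b) (by rw [h]; unfold evenQuartic; ring)
  have h24 : (5 : ℤ) ∣ 24 * A ^ 4 := (dvd_add_right (dvd_mul_right _ _)).1 h5
  have hA : (5 : ℤ) ∣ A := hp.dvd_of_dvd_pow ((hp.dvd_or_dvd h24).resolve_left (by norm_num))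
  exact hp.not_isUnit (hcop.isUnit_of_dvd' (dvd_mul_right 5 e) hA)

theorem exists_isCoprime_of_sq_eq_evenQuartic {a c e b x y : ℤ} (hy : y ≠ 0)
    (h : b ^ 2 = evenQuartic a c e x y) :
    ∃ b' x' y', IsCoprime x' y' ∧ y' ≠ 0 ∧ |y'| ≤ |y| ∧ b' ^ 2 = evenQuartic a c e x' y' := by
  obtain ⟨g, x', y', hg, hgcd, rfl, rfl⟩ :=
    Int.exists_gcd_one' (Int.gcd_pos_of_ne_zero_right x hy)
  rw [evenQuartic_mul] at h
  have hg0 : (g : ℤ) ≠ 0 := by exact_mod_cast hg.ne'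
  obtain ⟨b', rfl⟩ : (g : ℤ) ^ 2 ∣ b :=
    (Int.pow_dvd_pow_iff two_ne_zero).1 ⟨evenQuartic a c e x' y', by rw [h]; ring⟩
  exact ⟨b', x', y', Int.isCoprime_iff_gcd_eq_one.2 hgcd, left_ne_zero_of_mul hy,
    mul_comm y' g ▸ Int.abs_le_abs_mul_left hg0,
    mul_left_cancel₀ (pow_ne_zero 4 hg0) (by linear_combination h)⟩

theorem exists_sq_eq_evenQuartic_1750 {b d A : ℤ} (hcop : IsCoprime d A) (hA : A ≠ 0)
    (hd : ¬ 5 ∣ d) (h : b ^ 2 = evenQuartic 1 200 3000 d A) :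
    ∃ u v, IsCoprime u v ∧ v ≠ 0 ∧ |v| ≤ |A| ∧ d ^ 2 = evenQuartic 1 (-100) 1750 u v := by
  have hXA : IsCoprime (d ^ 2 + 100 * A ^ 2) A := by
    rw [show d ^ 2 + 100 * A ^ 2 = d ^ 2 + A * (100 * A) by ring]
    exact hcop.pow_left.add_mul_left_left _
  have hgcd (g : ℕ) (hg : g ^ 2 ∣ (1750 : ℤ).natAbs) (hgX : (g : ℤ) ∣ d ^ 2 + 100 * A ^ 2)
      (_ : (g : ℤ) ∣ b) : g = 1 := by
    have key : ∀ g ∈ Nat.divisors 1750, g ^ 2 ∣ 1750 → ¬ 5 ∣ g → g = 1 := by decide +kernel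
    refine key g (Nat.mem_divisors.2 ⟨(dvd_pow_self _ two_ne_zero).trans hg, by norm_num⟩) hg
      fun h5 => hd (Int.prime_five.dvd_of_dvd_pow (n := 2) ?_)
    exact (dvd_add_left (dvd_mul_of_dvd_left (by norm_num) _)).1
      ((Int.natCast_dvd_natCast.2 h5).trans hgX)
  obtain ⟨D₁, D₂, u, v, hD, hcopD, hcopuv, rfl, hX, -⟩ :=
    Int.exists_eq_mul_pow_four_add_of_sq_sub_sq (by norm_num) hA
      (by rw [h]; unfold evenQuartic; ring) hXA hgcd
  have hq : d ^ 2 = evenQuartic D₁ (-100) D₂ u v := by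
    unfold evenQuartic; linear_combination hX
  have hu : u ≠ 0 := left_ne_zero_of_mul hA
  have hv : v ≠ 0 := right_ne_zero_of_mul hA
  have hD₁ : 0 < D₁ := by
    by_contra! hD₁
    have hD₂ : D₂ < 0 := by nlinarith
    have : 0 < (u * v) ^ 2 := by positivity
    linarith [mul_nonpos_of_nonpos_of_nonneg hD₁ (by positivity : (0 : ℤ) ≤ u ^ 4),
      mul_nonpos_of_nonpos_of_nonneg hD₂.le (by positivity : (0 : ℤ) ≤ v ^ 4), sq_nonneg d]
  rcases eq_one_or_eq_one_of_sq_eq_evenQuartic_1750 hD hcopD hD₁ hd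
    (Int.odd_or_odd_of_isCoprime hcopuv) hq with rfl | rfl
  · exact ⟨u, v, hcopuv, hv, Int.abs_le_abs_mul_left hu,
      by rw [hq, show D₂ = 1750 by linarith]⟩
  · exact ⟨v, u, hcopuv.symm, hu, mul_comm u v ▸ Int.abs_le_abs_mul_left hv,
      by rw [hq, evenQuartic_comm, show D₁ = 1750 by linarith]⟩

theorem exists_sq_eq_evenQuartic_3000 {d u v : ℤ} (hcop : IsCoprime u v) (hv : v ≠ 0)
    (hd : ¬ 5 ∣ d) (h : d ^ 2 = evenQuartic 1 (-100) 1750 u v) :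
    ∃ s t, t ≠ 0 ∧ 2 * |t| ≤ |v| ∧ u ^ 2 = evenQuartic 1 200 3000 s t := by
  obtain ⟨w, rfl⟩ : 2 ∣ v := even_iff_two_dvd.1 <| Int.not_odd_iff_even.1 fun hodd =>
    sq_ne_evenQuartic_of_odd_right hodd (by decide) h
  have hw : w ≠ 0 := right_ne_zero_of_mul hv
  have hu : Odd u := (Int.odd_or_odd_of_isCoprime hcop).resolve_right (by simp [parity_simps])
  have hu5 : ¬ 5 ∣ u := by
    rintro ⟨u', rfl⟩
    exact hd <| Int.prime_five.dvd_of_dvd_pow (n := 2)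
      ⟨125 * u' ^ 4 - 2000 * u' ^ 2 * w ^ 2 + 5600 * w ^ 4,
        by rw [h]; unfold evenQuartic; ring⟩
  have hYw : IsCoprime (u ^ 2 - 200 * w ^ 2) w := by
    rw [show u ^ 2 - 200 * w ^ 2 = u ^ 2 + w * (-200 * w) by ring]
    exact hcop.of_mul_right_right.pow_left.add_mul_left_left _
  have hgcd (g : ℕ) (hg : g ^ 2 ∣ (3000 : ℤ).natAbs) (hgY : (g : ℤ) ∣ u ^ 2 - 200 * w ^ 2)
      (hgd : (g : ℤ) ∣ d) : g = 1 := by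
    have key : ∀ g ∈ Nat.divisors 3000, g ^ 2 ∣ 3000 → ¬ 2 ∣ g → ¬ 5 ∣ g → g = 1 := by
      decide +kernel
    refine key g (Nat.mem_divisors.2 ⟨(dvd_pow_self _ two_ne_zero).trans hg, by norm_num⟩) hg
      (fun h2 => ?_) fun h5 => hd ((Int.natCast_dvd_natCast.2 h5).trans hgd)
    have hu2 : (2 : ℤ) ∣ u ^ 2 := (dvd_sub_left (dvd_mul_of_dvd_left (by norm_num) _)).1
      ((Int.natCast_dvd_natCast.2 h2).trans hgY)
    exact Int.not_even_iff_odd.2 hu (even_iff_two_dvd.2 (Int.prime_two.dvd_of_dvd_pow hu2))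
  obtain ⟨D₁, D₂, s, t, hD, hcopD, -, rfl, hY, -⟩ :=
    Int.exists_eq_mul_pow_four_add_of_sq_sub_sq (by norm_num) hw
      (by rw [h]; unfold evenQuartic; ring) hYw hgcd
  have hq : u ^ 2 = evenQuartic D₁ 200 D₂ s t := by
    unfold evenQuartic; linear_combination hY
  have hs : s ≠ 0 := left_ne_zero_of_mul hw
  have ht : t ≠ 0 := right_ne_zero_of_mul hw
  rcases eq_one_or_eq_one_of_sq_eq_evenQuartic_3000 hD hcopD hu hu5 hq with rfl | rfl
  · refine ⟨s, t, ht, ?_, by rw [hq, show D₂ = 3000 by linarith]⟩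
    rw [abs_mul, abs_two]
    linarith [Int.abs_le_abs_mul_left (y := t) hs]
  · refine ⟨t, s, hs, ?_, by rw [hq, evenQuartic_comm, show D₁ = 3000 by linarith]⟩
    rw [abs_mul, abs_two, mul_comm s t]
    linarith [Int.abs_le_abs_mul_left (y := s) ht]

theorem eq_zero_of_sq_eq_evenQuartic (b d A : ℤ) (h : b ^ 2 = evenQuartic 1 200 3000 d A) :
    A = 0 := by
  by_contra hA
  obtain ⟨b', d', A', hcop, hA', hA'A, h'⟩ := exists_isCoprime_of_sq_eq_evenQuartic hA h
  have hd' := not_five_dvd_of_sq_eq_evenQuartic hcop h'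
  obtain ⟨u, v, hcopuv, hv, hvA, hq⟩ := exists_sq_eq_evenQuartic_1750 hcop hA' hd' h'
  obtain ⟨s, t, ht, htv, hu⟩ := exists_sq_eq_evenQuartic_3000 hcopuv hv hd' hq
  exact ht (eq_zero_of_sq_eq_evenQuartic u s t hu)
termination_by A.natAbs
decreasing_by
  have := abs_pos.2 ht
  simp only [Int.abs_eq_natAbs] at *
  omega

theorem stmt_9 (a b d : ℤ)
    (heq : b ^ 2 = d ^ 4 + 200 * d ^ 2 * a ^ 4 + 3000 * a ^ 8) :
    a = 0 :=
  pow_eq_zero_iff two_ne_zero |>.1 <| eq_zero_of_sq_eq_evenQuartic b d (a ^ 2) <| by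
    rw [heq]; unfold evenQuartic; ring
end

section
/- Let j be a positive integer and let x, d be rational numbers. Set z = x + ((j-1)/2)·d. Then the sum over i = 0, …, j-1 of (x + i·d)^5 equals (j·z/3) · (3z^4 + 5·((j^2-1)/2)·z^2·d^2 + ((j^2-1)(3j^2-7)/16)·d^4). -/
lemma aux_18 (j : ℕ) (x d : ℚ) :
    ∑ i ∈ Finset.range j, (x + (i : ℚ) * d) ^ 5 =
      ((j : ℚ) * (x + (((j : ℚ) - 1) / 2) * d) / 3) *
        (3 * (x + (((j : ℚ) - 1) / 2) * d) ^ 4 +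
          5 * (((j : ℚ) ^ 2 - 1) / 2) * (x + (((j : ℚ) - 1) / 2) * d) ^ 2 * d ^ 2 +
          ((((j : ℚ) ^ 2 - 1) * (3 * (j : ℚ) ^ 2 - 7)) / 16) * d ^ 4) := by
  induction j with
  | zero => simp
  | succ n ih =>
    rw [Finset.sum_range_succ, ih]
    push_cast
    ring

theorem stmt_18 (j : ℕ) (hj : 0 < j) (x d z : ℚ)
    (hz : z = x + (((j : ℚ) - 1) / 2) * d) :
    ∑ i ∈ Finset.range j, (x + (i : ℚ) * d) ^ 5 =
      ((j : ℚ) * z / 3) *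
        (3 * z ^ 4 + 5 * (((j : ℚ) ^ 2 - 1) / 2) * z ^ 2 * d ^ 2 +
          ((((j : ℚ) ^ 2 - 1) * (3 * (j : ℚ) ^ 2 - 7)) / 16) * d ^ 4) := by
  subst hz; exact aux_18 j x d
end

section
/- Let j be a positive integer with j ≡ 3 or j ≡ 15 modulo 18 (i.e., j ≡ ±3 mod 18), and let x, y, d, n be integers with n ≥ 2 and gcd(x,d) = 1. If Σ_{i=0}^{j-1} (x + i·d)^5 = y^n, then 3 does not divide d and 3 divides y. -/
/-!
Modulo 3 every integer satisfies `t ^ 5 = t`, so for `3 ∣ j` the sum is congruent to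
`j * x + d * j * (j - 1) / 2 ≡ 0`; hence `3 ∣ y`, and `9 ∣ y ^ n` as `n ≥ 2`.
If also `3 ∣ d`, the binomial terms of order `d ^ 2` vanish modulo 9 and the linear term
`5 * x ^ 4 * d * j * (j - 1) / 2` is divisible by 9, so the sum is `≡ j * x ^ 5 [ZMOD 9]`.
But `gcd(x, d) = 1` forces `3 ∤ x`, and `j ≡ 3, 6 (mod 9)`, so `9 ∤ j * x ^ 5`.
-/

open Finset

lemma dvd_sum_range_id {p n : ℕ} (hp : p.Coprime 2) (h : p ∣ n) : p ∣ ∑ i ∈ range n, i :=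
  hp.dvd_of_dvd_mul_right (sum_range_id_mul_two n ▸ dvd_mul_of_dvd_left h _)

lemma sq_dvd_sum_range_add_mul_pow_sub (j k : ℕ) (x d : ℤ) :
    d ^ 2 ∣ ∑ i ∈ range j, (x + i * d) ^ k
      - (j * x ^ k + k * x ^ (k - 1) * d * ∑ i ∈ range j, (i : ℤ)) := by
  have hsum : ∑ i ∈ range j, (x + i * d) ^ k
      - (j * x ^ k + k * x ^ (k - 1) * d * ∑ i ∈ range j, (i : ℤ))
      = ∑ i ∈ range j, ((x + i * d) ^ k - x ^ (k - 1) * (i * d) * k - x ^ k) := by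
    induction j with
    | zero => simp
    | succ j ih =>
      simp only [sum_range_succ]
      push_cast
      linear_combination ih
  rw [hsum]
  exact dvd_sum fun i _ =>
    (pow_dvd_pow_of_dvd (dvd_mul_left d i) 2).trans (sq_dvd_add_pow_sub_sub _ x k)

lemma three_dvd_sum_range_add_mul_pow_five {j : ℕ} (hj : 3 ∣ j) (x d : ℤ) :
    3 ∣ ∑ i ∈ range j, (x + i * d) ^ 5 := by
  have hfermat (t : ZMod 3) : t ^ 5 = t := by
    rw [show 5 = 3 + 2 by rfl, pow_add, ZMod.pow_card, ← pow_succ', ZMod.pow_card]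
  have hsum : ((∑ i ∈ range j, i : ℕ) : ZMod 3) = 0 :=
    (ZMod.natCast_eq_zero_iff _ 3).mpr (dvd_sum_range_id (by norm_num) hj)
  have hj' : (j : ZMod 3) = 0 := (ZMod.natCast_eq_zero_iff _ 3).mpr hj
  refine (ZMod.intCast_zmod_eq_zero_iff_dvd _ 3).mp ?_
  push_cast at hsum ⊢
  simp only [hfermat, sum_add_distrib, sum_const, card_range, nsmul_eq_mul,
    ← sum_mul, hsum, hj']
  ring

lemma nine_dvd_sum_range_add_mul_pow_five_sub {j : ℕ} (hj : 3 ∣ j) (x : ℤ) {d : ℤ}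
    (hd : 3 ∣ d) : 9 ∣ ∑ i ∈ range j, (x + i * d) ^ 5 - j * x ^ 5 := by
  have hsq : (9 : ℤ) ∣ d ^ 2 := by simpa using pow_dvd_pow_of_dvd hd 2
  have hlin : (9 : ℤ) ∣ 5 * x ^ 4 * d * ∑ i ∈ range j, (i : ℤ) := by
    have hsum : (3 : ℤ) ∣ ∑ i ∈ range j, (i : ℤ) := by
      simpa using Int.natCast_dvd_natCast.mpr (dvd_sum_range_id (by norm_num) hj)
    simpa using mul_dvd_mul (dvd_mul_of_dvd_right hd (5 * x ^ 4)) hsum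
  simpa [sub_add_eq_sub_sub] using
    dvd_add (hsq.trans (sq_dvd_sum_range_add_mul_pow_sub j 5 x d)) hlin

lemma not_nine_dvd_mul_pow {j x : ℤ} (hj : ¬ 9 ∣ j) (hx : ¬ 3 ∣ x) (k : ℕ) :
    ¬ 9 ∣ j * x ^ k := fun h =>
  hj <| ((Int.prime_three.coprime_iff_not_dvd.mpr hx).pow (m := 2)).dvd_of_dvd_mul_right
    (by simpa using h)

theorem stmt_19_general (j : ℕ) (hjmod : j % 18 = 3 ∨ j % 18 = 15)
    (x y d : ℤ) (n : ℕ) (hn : 2 ≤ n) (hgcd : Int.gcd x d = 1)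
    (heq : ∑ i ∈ Finset.range j, (x + (i : ℤ) * d) ^ 5 = y ^ n) :
    ¬ (3 ∣ d) ∧ 3 ∣ y := by
  have hj3 : 3 ∣ j := by omega
  have hy : 3 ∣ y :=
    Int.prime_three.dvd_of_dvd_pow (heq ▸ three_dvd_sum_range_add_mul_pow_five hj3 x d)
  refine ⟨fun hd => ?_, hy⟩
  have hx : ¬ 3 ∣ x := fun hx => by simpa [hgcd] using Int.dvd_coe_gcd hx hd
  have hyn : 9 ∣ y ^ n := (pow_dvd_pow_of_dvd hy 2).trans (pow_dvd_pow y hn)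
  have hsub := nine_dvd_sum_range_add_mul_pow_five_sub hj3 x hd
  rw [heq] at hsub
  exact not_nine_dvd_mul_pow (by omega) hx 5 ((dvd_sub_right hyn).mp hsub)

theorem stmt_19 (j : ℕ) (hj : 0 < j) (hjmod : j % 18 = 3 ∨ j % 18 = 15)
    (x y d : ℤ) (n : ℕ) (hn : 2 ≤ n) (hgcd : Int.gcd x d = 1)
    (heq : ∑ i ∈ Finset.range j, (x + (i : ℤ) * d) ^ 5 = y ^ n) :
    ¬ (3 ∣ d) ∧ 3 ∣ y :=
  stmt_19_general j hjmod x y d n hn hgcd heq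
end
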